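/- arXiv:math/9903101 — 2 statements merged into one kernel-verified Lean document; each statement's English description precedes it below -/
import Mathlib

section
/- A triple of real numbers (x, y, z) with 0 < x, y, z ≤ π arises as the pairwise spherical distances d(p,q), d(q,r), d(r,p) of three points p, q, r on the unit two-sphere if and only if it satisfies the spherical triangle inequalities: x + y + z ≤ 2π, x ≤ y + z, y ≤ z + x, and z ≤ x + y. -/
open scoped RealInnerProductSpace

noncomputable def sdist (u v : EuclideanSpace ℝ (Fin 3)) : ℝ :=
  Real.arccos ⟪u, v⟫

def unitSphere : Set (EuclideanSpace ℝ (Fin 3)) :=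
  Metric.sphere (0 : EuclideanSpace ℝ (Fin 3)) 1

/-!
Spherical distances between unit vectors are unoriented angles, so necessity is the triangle
inequality for angles, applied once more through `-q` (where `angle p (-q) = π - angle p q`) to bound
the perimeter by `2π`. Conversely, put `p` at the pole, `q` at polar angle `x` on the meridian
`φ = 0` and `r` at polar angle `z` on the meridian `φ`: then `⟪q, r⟫ = cos x cos z + sin x sin z cos φ`
sweeps `[cos (x + z), cos (x - z)]` as `φ` runs over `[0, π]`, and the triangle inequalities say
exactly that `cos y` lies in this interval.
-/

open Real InnerProductGeometry

theorem angle_add_angle_add_angle_le_two_pi {V : Type*} [NormedAddCommGroup V]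
    [InnerProductSpace ℝ V] (x y z : V) : angle x y + angle y z + angle z x ≤ 2 * π := by
  have h := angle_le_angle_add_angle z (-y) x
  rw [angle_neg_right, angle_neg_left, angle_comm z y, angle_comm y x] at h
  linarith

theorem sdist_eq_angle {u v : EuclideanSpace ℝ (Fin 3)} (hu : u ∈ unitSphere)
    (hv : v ∈ unitSphere) : sdist u v = angle u v := by
  rw [unitSphere, mem_sphere_zero_iff_norm] at hu hv
  rw [sdist, angle, hu, hv, mul_one, div_one]

theorem cos_add_le_cos_of_le_add {x y z : ℝ} (hz : 0 ≤ z) (h₁ : z ≤ x + y)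
    (h₂ : x + y + z ≤ 2 * π) : cos (x + y) ≤ cos z := by
  rcases le_or_gt (x + y) π with h | h
  · exact cos_le_cos_of_nonneg_of_le_pi hz h h₁
  · rw [← cos_two_pi_sub (x + y)]
    exact cos_le_cos_of_nonneg_of_le_pi hz (by linarith) (by linarith)

theorem cos_le_cos_sub_of_abs_sub_le {x y z : ℝ} (hz : z ≤ π) (h : |x - y| ≤ z) :
    cos z ≤ cos (x - y) := by
  rw [← cos_abs (x - y)]
  exact cos_le_cos_of_nonneg_of_le_pi (abs_nonneg _) hz h

theorem exists_cos_mul_cos_add_sin_mul_sin_mul_cos_eq {a b c : ℝ} (h₁ : cos (a + b) ≤ c)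
    (h₂ : c ≤ cos (a - b)) : ∃ φ, cos a * cos b + sin a * sin b * cos φ = c := by
  have hf : ContinuousOn (fun φ ↦ cos a * cos b + sin a * sin b * cos φ) (Set.Icc 0 π) := by
    fun_prop
  obtain ⟨φ, -, hφ⟩ := intermediate_value_Icc' pi_pos.le hf
    ⟨by simpa [cos_add] using h₁, by simpa [cos_sub] using h₂⟩
  exact ⟨φ, hφ⟩

noncomputable def sphericalPoint (θ φ : ℝ) : EuclideanSpace ℝ (Fin 3) :=
  !₂[cos θ, sin θ * cos φ, sin θ * sin φ]

theorem sphericalPoint_mem_unitSphere (θ φ : ℝ) : sphericalPoint θ φ ∈ unitSphere := by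
  rw [unitSphere, mem_sphere_zero_iff_norm, EuclideanSpace.norm_eq, sqrt_eq_one]
  simp only [sphericalPoint, Fin.sum_univ_three, Real.norm_eq_abs, sq_abs, Fin.isValue,
    Matrix.cons_val_zero, Matrix.cons_val_one, Matrix.cons_val]
  nlinarith [sin_sq_add_cos_sq θ, sin_sq_add_cos_sq φ]

theorem inner_sphericalPoint (θ φ θ' φ' : ℝ) :
    ⟪sphericalPoint θ φ, sphericalPoint θ' φ'⟫ = cos θ * cos θ' + sin θ * sin θ' * cos (φ - φ') := by
  simp only [sphericalPoint, PiLp.inner_apply, RCLike.inner_apply, conj_trivial,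
    Fin.sum_univ_three, Fin.isValue, Matrix.cons_val_zero, Matrix.cons_val_one, Matrix.cons_val,
    cos_sub]
  ring

theorem exists_sdist_eq_of_triangle_inequalities {x y z : ℝ} (h₁ : x + y + z ≤ 2 * π)
    (h₂ : x ≤ y + z) (h₃ : y ≤ z + x) (h₄ : z ≤ x + y) :
    ∃ p q r : EuclideanSpace ℝ (Fin 3), p ∈ unitSphere ∧ q ∈ unitSphere ∧ r ∈ unitSphere ∧
      sdist p q = x ∧ sdist q r = y ∧ sdist r p = z := by
  -- the triangle inequalities already force `0 ≤ x, y, z ≤ π`, as `linarith` uses below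
  obtain ⟨φ, hφ⟩ := exists_cos_mul_cos_add_sin_mul_sin_mul_cos_eq (a := x) (b := z) (c := cos y)
    (cos_add_le_cos_of_le_add (by linarith) (by linarith) (by linarith))
    (cos_le_cos_sub_of_abs_sub_le (by linarith) (abs_sub_le_iff.2 ⟨by linarith, by linarith⟩))
  refine ⟨sphericalPoint 0 0, sphericalPoint x 0, sphericalPoint z φ,
    sphericalPoint_mem_unitSphere _ _, sphericalPoint_mem_unitSphere _ _,
    sphericalPoint_mem_unitSphere _ _, ?_, ?_, ?_⟩ <;>
  simp only [sdist, inner_sphericalPoint, cos_zero, sin_zero, zero_sub, cos_neg, hφ, one_mul,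
    mul_one, zero_mul, mul_zero, add_zero] <;>
  exact arccos_cos (by linarith) (by linarith)

theorem stmt_0_general (x y z : ℝ) :
    (∃ p q r : EuclideanSpace ℝ (Fin 3), p ∈ unitSphere ∧ q ∈ unitSphere ∧ r ∈ unitSphere ∧
      sdist p q = x ∧ sdist q r = y ∧ sdist r p = z) ↔
    (x + y + z ≤ 2 * Real.pi ∧ x ≤ y + z ∧ y ≤ z + x ∧ z ≤ x + y) := by
  refine ⟨?_, fun ⟨h₁, h₂, h₃, h₄⟩ ↦ exists_sdist_eq_of_triangle_inequalities h₁ h₂ h₃ h₄⟩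
  rintro ⟨p, q, r, hp, hq, hr, rfl, rfl, rfl⟩
  rw [sdist_eq_angle hp hq, sdist_eq_angle hq hr, sdist_eq_angle hr hp]
  refine ⟨angle_add_angle_add_angle_le_two_pi p q r, ?_, ?_, ?_⟩ <;>
  linarith [angle_le_angle_add_angle p r q, angle_le_angle_add_angle q p r,
    angle_le_angle_add_angle r q p, angle_comm p q, angle_comm q r, angle_comm r p]

theorem stmt_0 (x y z : ℝ) (hx : 0 < x) (hy : 0 < y) (hz : 0 < z)
    (hx' : x ≤ Real.pi) (hy' : y ≤ Real.pi) (hz' : z ≤ Real.pi) :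
    (∃ p q r : EuclideanSpace ℝ (Fin 3), p ∈ unitSphere ∧ q ∈ unitSphere ∧ r ∈ unitSphere ∧
      sdist p q = x ∧ sdist q r = y ∧ sdist r p = z) ↔
    (x + y + z ≤ 2 * Real.pi ∧ x ≤ y + z ∧ y ≤ z + x ∧ z ≤ x + y) :=
  stmt_0_general x y z
end

section
/- For points p, q, r on the unit two-sphere with x = d(p,q), y = d(q,r), z = d(r,p), the three points are pairwise distinct if and only if x, y, z are all strictly positive; and in that case the spherical triangle inequalities x + y + z ≤ 2π, x ≤ y + z, y ≤ z + x, z ≤ x + y hold. -/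
open scoped RealInnerProductSpace

private lemma key_tri {u v w : EuclideanSpace ℝ (Fin 3)}
    (hu : ‖u‖ = 1) (hv : ‖v‖ = 1) (hw : ‖w‖ = 1) :
    Real.arccos ⟪u, w⟫ ≤ Real.arccos ⟪u, v⟫ + Real.arccos ⟪v, w⟫ := by
  have habs : ∀ s t : EuclideanSpace ℝ (Fin 3), ‖s‖ = 1 → ‖t‖ = 1 → |⟪s, t⟫| ≤ 1 := by
    intro s t hs ht
    simpa [hs, ht] using abs_real_inner_le_norm s t
  have ha1 := abs_le.mp (habs u v hu hv)
  have hb1 := abs_le.mp (habs v w hv hw)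
  have huu : ⟪u, u⟫ = 1 := by rw [real_inner_self_eq_norm_sq, hu]; norm_num
  have hvv : ⟪v, v⟫ = 1 := by rw [real_inner_self_eq_norm_sq, hv]; norm_num
  have hww : ⟪w, w⟫ = 1 := by rw [real_inner_self_eq_norm_sq, hw]; norm_num
  by_cases hcase : Real.pi ≤ Real.arccos ⟪u, v⟫ + Real.arccos ⟪v, w⟫
  · exact le_trans (Real.arccos_le_pi _) hcase
  push_neg at hcase
  have hsum0 : 0 ≤ Real.arccos ⟪u, v⟫ + Real.arccos ⟪v, w⟫ :=
    add_nonneg (Real.arccos_nonneg _) (Real.arccos_nonneg _)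
  set u' := u - ⟪u, v⟫ • v with hu'
  set w' := w - ⟪v, w⟫ • v with hw'
  have hinner : ⟪u', w'⟫ = ⟪u, w⟫ - ⟪u, v⟫ * ⟪v, w⟫ := by
    simp only [hu', hw', inner_sub_left, inner_sub_right, real_inner_smul_left,
      real_inner_smul_right, hvv, mul_one, real_inner_comm v u]
    ring
  have hnu : ‖u'‖ = Real.sqrt (1 - ⟪u, v⟫ ^ 2) := by
    have h2 : ⟪u', u'⟫ = 1 - ⟪u, v⟫ ^ 2 := by
      simp only [hu', inner_sub_left, inner_sub_right, real_inner_smul_left,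
        real_inner_smul_right, hvv, huu, mul_one, real_inner_comm v u]
      ring
    rw [← Real.sqrt_sq (norm_nonneg u'), sq, ← real_inner_self_eq_norm_mul_norm, h2]
  have hnw : ‖w'‖ = Real.sqrt (1 - ⟪v, w⟫ ^ 2) := by
    have h2 : ⟪w', w'⟫ = 1 - ⟪v, w⟫ ^ 2 := by
      simp only [hw', inner_sub_left, inner_sub_right, real_inner_smul_left,
        real_inner_smul_right, hvv, hww, mul_one, real_inner_comm v w]
      ring
    rw [← Real.sqrt_sq (norm_nonneg w'), sq, ← real_inner_self_eq_norm_mul_norm, h2]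
  have hcs := neg_le_of_abs_le (abs_real_inner_le_norm u' w')
  rw [hinner, hnu, hnw] at hcs
  have hcos : Real.cos (Real.arccos ⟪u, v⟫ + Real.arccos ⟪v, w⟫) ≤ ⟪u, w⟫ := by
    rw [Real.cos_add, Real.cos_arccos ha1.1 ha1.2, Real.cos_arccos hb1.1 hb1.2,
      Real.sin_arccos, Real.sin_arccos]
    linarith
  have hc1 := abs_le.mp (habs u w hu hw)
  calc Real.arccos ⟪u, w⟫
      ≤ Real.arccos (Real.cos (Real.arccos ⟪u, v⟫ + Real.arccos ⟪v, w⟫)) :=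
        Real.strictAntiOn_arccos.antitoneOn
          ⟨Real.neg_one_le_cos _, Real.cos_le_one _⟩ ⟨hc1.1, hc1.2⟩ hcos
    _ = _ := Real.arccos_cos hsum0 hcase.le

theorem stmt_10 (p q r : EuclideanSpace ℝ (Fin 3))
    (hp : p ∈ unitSphere) (hq : q ∈ unitSphere) (hr : r ∈ unitSphere)
    (x y z : ℝ) (hx : x = sdist p q) (hy : y = sdist q r) (hz : z = sdist r p) :
    ((p ≠ q ∧ q ≠ r ∧ r ≠ p) ↔ (0 < x ∧ 0 < y ∧ 0 < z)) ∧
    ((p ≠ q ∧ q ≠ r ∧ r ≠ p) →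
      x + y + z ≤ 2 * Real.pi ∧ x ≤ y + z ∧ y ≤ z + x ∧ z ≤ x + y) := by
  have hp1 : ‖p‖ = 1 := by simpa [unitSphere] using hp
  have hq1 : ‖q‖ = 1 := by simpa [unitSphere] using hq
  have hr1 : ‖r‖ = 1 := by simpa [unitSphere] using hr
  have hpos : ∀ (u v : EuclideanSpace ℝ (Fin 3)), ‖u‖ = 1 → ‖v‖ = 1 →
      (u ≠ v ↔ 0 < sdist u v) := by
    intro u v hu hv
    rw [sdist, Real.arccos_pos]
    have hle : ⟪u, v⟫ ≤ 1 := by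
      have h := real_inner_le_norm u v
      rwa [hu, hv, one_mul] at h
    constructor
    · intro hne
      rcases lt_or_eq_of_le hle with h | h
      · exact h
      · exact absurd ((inner_eq_one_iff_of_norm_eq_one hu hv).mp h) hne
    · intro h he
      rw [he, real_inner_self_eq_norm_sq, hv] at h
      norm_num at h
  have hneg1 : ‖(-r : EuclideanSpace ℝ (Fin 3))‖ = 1 := by simpa using hr1
  constructor
  · rw [hx, hy, hz]
    exact and_congr (hpos p q hp1 hq1) (and_congr (hpos q r hq1 hr1) (hpos r p hr1 hp1))
  · intro _
    rw [hx, hy, hz, sdist, sdist, sdist]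
    have t1 : Real.arccos ⟪p, q⟫ ≤ Real.arccos ⟪q, r⟫ + Real.arccos ⟪r, p⟫ := by
      have h := key_tri hp1 hr1 hq1
      rw [real_inner_comm r p, real_inner_comm q r] at h
      linarith
    have t2 : Real.arccos ⟪q, r⟫ ≤ Real.arccos ⟪r, p⟫ + Real.arccos ⟪p, q⟫ := by
      have h := key_tri hq1 hp1 hr1
      rw [real_inner_comm p q, real_inner_comm r p] at h
      linarith
    have t3 : Real.arccos ⟪r, p⟫ ≤ Real.arccos ⟪p, q⟫ + Real.arccos ⟪q, r⟫ := by
      have h := key_tri hr1 hq1 hp1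
      rw [real_inner_comm q r, real_inner_comm p q] at h
      linarith
    have t4 : Real.arccos ⟪p, q⟫ + Real.arccos ⟪q, r⟫ + Real.arccos ⟪r, p⟫
        ≤ 2 * Real.pi := by
      have h := key_tri (u := p) (v := -r) (w := q) hp1 hneg1 hq1
      have e1 : ⟪p, (-r : EuclideanSpace ℝ (Fin 3))⟫ = -⟪p, r⟫ := by simp
      have e2 : ⟪(-r : EuclideanSpace ℝ (Fin 3)), q⟫ = -⟪r, q⟫ := by simp
      rw [e1, e2, Real.arccos_neg, Real.arccos_neg, real_inner_comm r p,
        real_inner_comm q r] at h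
      linarith
    exact ⟨t4, t1, t2, t3⟩
end
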